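/- Let λ0, λ1 > 0, γ0 > 0 > γ1, t > 0 and 0 < x < γ0·t. For every natural number n ≥ 1, ∫_0^{ξ1(t,x)} λ0·e^{−λ1·s} · (λ0·λ1·(x − γ1·s)/γ0) · z(t−s, x−γ1·s)^{n−1}/((n−1)!·n!) · θ(t−s, x−γ1·s) ds = (λ0/(γ0·ξ0(t,x))) · z(t,x)^n/(n!)² · (x − (γ1/(n+1))·ξ1(t,x)) · θ(t,x). (This verifies the second equation of the coupled system for positive telegraphic meanders: the explicit meander density g⁺(t,x;2n) = (λ0·λ1·x/γ0)·z^{n−1}/((n−1)!·n!)·θ produces g⁺(t,x;2n+1) = (λ0/(γ0·ξ0))·z^n/(n!)²·(x − γ1·ξ1/(n+1))·θ by conditioning on the last velocity change.) -/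

import Mathlib

/-!
After the last switch, at time `t - s`, the trajectory moves with velocity `γ₁`, so the
integrand is evaluated along the segment `s ↦ (t - s, x - γ₁ s)`. On it `ξ₀` is constant,
`ξ₁` decreases by `s`, and `θ` picks up a factor `e^{λ₁ s}` that cancels the exponential
weight. The integrand is therefore a constant times `(x - γ₁ s) (ξ₁ - s)^{n-1}`, a polynomial
whose integral over `[0, ξ₁]` is elementary.
-/

open Real Filter MeasureTheory

/-- `ξ₀(t,x) = (x − γ₁ t)/(γ₀ − γ₁)`. -/
noncomputable def xi0 (g0 g1 t x : ℝ) : ℝ := (x - g1 * t) / (g0 - g1)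

/-- `ξ₁(t,x) = (γ₀ t − x)/(γ₀ − γ₁)`. -/
noncomputable def xi1 (g0 g1 t x : ℝ) : ℝ := (g0 * t - x) / (g0 - g1)

/-- `z(t,x) = λ₀ λ₁ ξ₀(t,x) ξ₁(t,x)`. -/
noncomputable def zf (l0 l1 g0 g1 t x : ℝ) : ℝ := l0 * l1 * xi0 g0 g1 t x * xi1 g0 g1 t x

/-- `θ(t,x) = exp(−λ₀ ξ₀(t,x) − λ₁ ξ₁(t,x))/(γ₀ − γ₁)`. -/
noncomputable def thetaf (l0 l1 g0 g1 t x : ℝ) : ℝ :=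
  Real.exp (-(l0 * xi0 g0 g1 t x) - l1 * xi1 g0 g1 t x) / (g0 - g1)

section Characteristic

variable {l0 l1 g0 g1 : ℝ} (t x s : ℝ)

theorem xi0_sub_sub_mul : xi0 g0 g1 (t - s) (x - g1 * s) = xi0 g0 g1 t x := by
  unfold xi0; ring

theorem xi1_sub_sub_mul (h : g0 ≠ g1) :
    xi1 g0 g1 (t - s) (x - g1 * s) = xi1 g0 g1 t x - s := by
  unfold xi1; field_simp [sub_ne_zero.2 h]; ring

theorem zf_sub_sub_mul (h : g0 ≠ g1) :
    zf l0 l1 g0 g1 (t - s) (x - g1 * s) =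
      l0 * l1 * xi0 g0 g1 t x * (xi1 g0 g1 t x - s) := by
  rw [zf, xi0_sub_sub_mul, xi1_sub_sub_mul t x s h]

theorem thetaf_sub_sub_mul (h : g0 ≠ g1) :
    thetaf l0 l1 g0 g1 (t - s) (x - g1 * s) = thetaf l0 l1 g0 g1 t x * exp (l1 * s) := by
  rw [thetaf, thetaf, xi0_sub_sub_mul, xi1_sub_sub_mul t x s h, div_mul_eq_mul_div,
    ← exp_add]
  ring_nf

end Characteristic

theorem integral_sub_pow (b : ℝ) (k : ℕ) :
    ∫ s in (0 : ℝ)..b, (b - s) ^ k = b ^ (k + 1) / (k + 1) := by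
  simp [intervalIntegral.integral_comp_sub_left (· ^ k) b, integral_pow]

theorem integral_sub_mul_mul_sub_pow (x g b : ℝ) (k : ℕ) :
    ∫ s in (0 : ℝ)..b, (x - g * s) * (b - s) ^ k =
      b ^ (k + 1) / (k + 1) * (x - g / (k + 2) * b) := by
  have hsplit : ∀ s, (x - g * s) * (b - s) ^ k =
      (x - g * b) * (b - s) ^ k + g * (b - s) ^ (k + 1) := fun s => by ring
  have hcont : ∀ j : ℕ, IntervalIntegrable (fun s => (b - s) ^ j) volume 0 b :=
    fun j => ((continuous_const.sub continuous_id).pow j).intervalIntegrable _ _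
  simp_rw [hsplit]
  rw [intervalIntegral.integral_add ((hcont k).const_mul _) ((hcont (k + 1)).const_mul _),
    intervalIntegral.integral_const_mul, intervalIntegral.integral_const_mul,
    integral_sub_pow, integral_sub_pow]
  push_cast
  field_simp
  ring

theorem meander_last_switch_odd_general (l0 l1 g0 g1 t x : ℝ)
    (hg0 : 0 < g0) (hg1 : g1 < 0)
    (ht : 0 < t) (hx1 : 0 < x) (n : ℕ) (hn : 1 ≤ n) :
    ∫ s in (0 : ℝ)..(xi1 g0 g1 t x),
        l0 * Real.exp (-(l1 * s)) *
          (l0 * l1 * (x - g1 * s) / g0) *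
          (zf l0 l1 g0 g1 (t - s) (x - g1 * s)) ^ (n - 1)
          / ((Nat.factorial (n - 1) : ℝ) * (Nat.factorial n : ℝ)) *
          thetaf l0 l1 g0 g1 (t - s) (x - g1 * s)
      = (l0 / (g0 * xi0 g0 g1 t x)) * (zf l0 l1 g0 g1 t x) ^ n / (Nat.factorial n : ℝ) ^ 2 *
          (x - (g1 / ((n : ℝ) + 1)) * xi1 g0 g1 t x) * thetaf l0 l1 g0 g1 t x := by
  obtain ⟨m, rfl⟩ := Nat.exists_eq_add_of_le' hn
  have hg : g0 ≠ g1 := (hg1.trans hg0).ne'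
  have hX0 : xi0 g0 g1 t x ≠ 0 := (div_pos (by nlinarith) (by linarith)).ne'
  set X0 := xi0 g0 g1 t x
  set X1 := xi1 g0 g1 t x
  set θ := thetaf l0 l1 g0 g1 t x
  rw [Nat.add_sub_cancel]
  calc
    _ = ∫ s in (0 : ℝ)..X1, l0 ^ 2 * l1 * (l0 * l1 * X0) ^ m * θ /
          (g0 * m.factorial * (m + 1).factorial) * ((x - g1 * s) * (X1 - s) ^ m) :=
      intervalIntegral.integral_congr fun s _ => by
        rw [zf_sub_sub_mul t x s hg, thetaf_sub_sub_mul t x s hg, mul_pow, exp_neg]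
        field_simp
        ring
    _ = _ := by
      rw [intervalIntegral.integral_const_mul, integral_sub_mul_mul_sub_pow, zf,
        Nat.factorial_succ]
      push_cast
      field_simp
      ring

/-- second equation of the coupled system for positive telegraphic meanders —
the meander density `g⁺(t,x;2n)` produces `g⁺(t,x;2n+1)` by conditioning on the last
velocity change. -/
theorem meander_last_switch_odd (l0 l1 g0 g1 t x : ℝ)
    (hl0 : 0 < l0) (hl1 : 0 < l1) (hg0 : 0 < g0) (hg1 : g1 < 0)
    (ht : 0 < t) (hx1 : 0 < x) (hx2 : x < g0 * t) (n : ℕ) (hn : 1 ≤ n) :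
    ∫ s in (0 : ℝ)..(xi1 g0 g1 t x),
        l0 * Real.exp (-(l1 * s)) *
          (l0 * l1 * (x - g1 * s) / g0) *
          (zf l0 l1 g0 g1 (t - s) (x - g1 * s)) ^ (n - 1)
          / ((Nat.factorial (n - 1) : ℝ) * (Nat.factorial n : ℝ)) *
          thetaf l0 l1 g0 g1 (t - s) (x - g1 * s)
      = (l0 / (g0 * xi0 g0 g1 t x)) * (zf l0 l1 g0 g1 t x) ^ n / (Nat.factorial n : ℝ) ^ 2 *
          (x - (g1 / ((n : ℝ) + 1)) * xi1 g0 g1 t x) * thetaf l0 l1 g0 g1 t x :=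
  meander_last_switch_odd_general l0 l1 g0 g1 t x hg0 hg1 ht hx1 n hn
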